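/- For β ∈ (0,1), the function v(z₁,z₂) = (2/(1-β))|z₂|(|z₁|^β + |z₁|^{2-β}) is locally β-Hölder continuous on ℂ² but not locally α-Hölder continuous near points (0,z₂) with z₂ ≠ 0 for any α > β. -/

import Mathlib

/-!
The factors `‖z₂‖` and `‖z₁‖ ^ (2 - β)` of `v` are locally Lipschitz, hence locally `β`-Hölder,
and `‖z₁‖ ^ β` is globally `β`-Hölder because `t ↦ t ^ β` is subadditive on `[0, ∞)`. Locally
Hölder functions are locally bounded, so their sums and products are again locally Hölder.
Conversely, along the line `t ↦ (t, z₂)` the increment `v (t, z₂) - v (0, z₂)` is at least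
`(2 / (1 - β)) ‖z₂‖ |t| ^ β`, which is not `O(|t| ^ α)` as `t → 0` when `z₂ ≠ 0` and `α > β`.
-/

/-- `v(z₁,z₂) = (2/(1-β))|z₂|(|z₁|^β + |z₁|^{2-β})`. -/
noncomputable def v (β : ℝ) (z : ℂ × ℂ) : ℝ :=
  (2 / (1 - β)) * ‖z.2‖ * ((‖z.1‖) ^ β + (‖z.1‖) ^ (2 - β))

open Set Metric Filter Topology
open scoped NNReal ENNReal

namespace Real

theorem abs_rpow_sub_rpow_le {a b p : ℝ} (ha : 0 ≤ a) (hb : 0 ≤ b) (hp₀ : 0 ≤ p) (hp₁ : p ≤ 1) :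
    |a ^ p - b ^ p| ≤ |a - b| ^ p := by
  wlog hba : b ≤ a generalizing a b
  · rw [abs_sub_comm, abs_sub_comm a]
    exact this hb ha (le_of_not_ge hba)
  have hsub : a ^ p ≤ (a - b) ^ p + b ^ p := by
    simpa using rpow_add_le_add_rpow (sub_nonneg.2 hba) hb hp₀ hp₁
  rw [abs_of_nonneg (sub_nonneg.2 (rpow_le_rpow hb hba hp₀)), abs_of_nonneg (sub_nonneg.2 hba)]
  linarith

end Real

section Holder

variable {X Y : Type*} [PseudoMetricSpace X]

theorem HolderOnWith.of_dist_le [PseudoMetricSpace Y] {C r : ℝ≥0} {f : X → Y} {s : Set X}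
    (h : ∀ x ∈ s, ∀ y ∈ s, dist (f x) (f y) ≤ C * dist x y ^ (r : ℝ)) :
    HolderOnWith C r f s := by
  intro x hx y hy
  rw [edist_dist, edist_dist, ENNReal.ofReal_rpow_of_nonneg dist_nonneg r.coe_nonneg,
    ← ENNReal.ofReal_coe_nnreal, ← ENNReal.ofReal_mul C.coe_nonneg]
  exact ENNReal.ofReal_le_ofReal (h x hx y hy)

theorem HolderOnWith.add [SeminormedAddCommGroup Y] {C C' r : ℝ≥0} {f g : X → Y} {s : Set X}
    (hf : HolderOnWith C r f s) (hg : HolderOnWith C' r g s) :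
    HolderOnWith (C + C') r (f + g) s := by
  rw [← HolderWith.restrict_iff] at *
  exact hf.add hg

theorem HolderOnWith.mul [SeminormedRing Y] {Cf Cg A B r : ℝ≥0} {f g : X → Y} {s : Set X}
    (hf : HolderOnWith Cf r f s) (hg : HolderOnWith Cg r g s)
    (hfA : ∀ x ∈ s, ‖f x‖ ≤ A) (hgB : ∀ x ∈ s, ‖g x‖ ≤ B) :
    HolderOnWith (A * Cg + Cf * B) r (f * g) s := by
  refine .of_dist_le fun x hx y hy => ?_
  have hdf := hf.dist_le hx hy
  have hdg := hg.dist_le hx hy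
  rw [dist_eq_norm] at hdf hdg ⊢
  calc ‖f x * g x - f y * g y‖ = ‖f x * (g x - g y) + (f x - f y) * g y‖ := by
        congr 1; noncomm_ring
    _ ≤ ‖f x‖ * ‖g x - g y‖ + ‖f x - f y‖ * ‖g y‖ :=
        norm_add_le_of_le (norm_mul_le _ _) (norm_mul_le _ _)
    _ ≤ A * (Cg * dist x y ^ (r : ℝ)) + Cf * dist x y ^ (r : ℝ) * B := by
        gcongr
        exacts [hfA x hx, hgB y hy]
    _ = ↑(A * Cg + Cf * B) * dist x y ^ (r : ℝ) := by push_cast; ring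

def LocallyHolderAt [PseudoMetricSpace Y] (r : ℝ≥0) (f : X → Y) (x : X) : Prop :=
  ∃ s ∈ 𝓝 x, ∃ C : ℝ≥0, HolderOnWith C r f s

theorem HolderWith.locallyHolderAt [PseudoMetricSpace Y] {C r : ℝ≥0} {f : X → Y}
    (hf : HolderWith C r f) (x : X) : LocallyHolderAt r f x :=
  ⟨univ, univ_mem, C, hf.holderOnWith univ⟩

theorem LocallyLipschitz.locallyHolderAt [PseudoMetricSpace Y] {r : ℝ≥0} {f : X → Y}
    (hf : LocallyLipschitz f) (hr : r ≤ 1) (x : X) : LocallyHolderAt r f x := by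
  obtain ⟨K, t, ht, hK⟩ := hf x
  have hdiam : ∀ y ∈ t ∩ eball x 1, ∀ z ∈ t ∩ eball x 1, edist y z ≤ (2 : ℝ≥0) := by
    intro y hy z hz
    calc edist y z ≤ edist y x + edist x z := edist_triangle _ _ _
      _ ≤ 1 + 1 := add_le_add (le_of_lt hy.2) (edist_comm x z ▸ le_of_lt hz.2)
      _ = (2 : ℝ≥0) := by norm_num
  have hLip : HolderOnWith K 1 f (t ∩ eball x 1) :=
    holderOnWith_one.2 (hK.mono inter_subset_left)
  exact ⟨_, inter_mem ht (eball_mem_nhds x one_pos), _, hLip.of_le hdiam hr⟩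

namespace LocallyHolderAt

theorem add [SeminormedAddCommGroup Y] {r : ℝ≥0} {f g : X → Y} {x : X}
    (hf : LocallyHolderAt r f x) (hg : LocallyHolderAt r g x) : LocallyHolderAt r (f + g) x := by
  obtain ⟨s, hs, C, hC⟩ := hf
  obtain ⟨t, ht, C', hC'⟩ := hg
  exact ⟨s ∩ t, inter_mem hs ht, C + C',
    (hC.mono inter_subset_left).add (hC'.mono inter_subset_right)⟩

theorem exists_holderOnWith_bounded [SeminormedAddCommGroup Y] {r : ℝ≥0} {f : X → Y} {x : X}
    (hf : LocallyHolderAt r f x) :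
    ∃ s ∈ 𝓝 x, ∃ C M : ℝ≥0, HolderOnWith C r f s ∧ ∀ y ∈ s, ‖f y‖ ≤ M := by
  obtain ⟨s, hs, C, hC⟩ := hf
  refine ⟨s ∩ ball x 1, inter_mem hs (ball_mem_nhds x one_pos), C, ‖f x‖₊ + C,
    hC.mono inter_subset_left, fun y hy => ?_⟩
  have hdist : dist y x ^ (r : ℝ) ≤ 1 :=
    Real.rpow_le_one dist_nonneg (mem_ball.1 hy.2).le r.coe_nonneg
  have hfy := hC.dist_le hy.1 (mem_of_mem_nhds hs)
  rw [dist_eq_norm] at hfy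
  calc ‖f y‖ ≤ ‖f x‖ + ‖f y - f x‖ := norm_le_norm_add_norm_sub' _ _
    _ ≤ ‖f x‖ + C * 1 := by gcongr; exact hfy.trans (by gcongr)
    _ = ↑(‖f x‖₊ + C) := by push_cast; ring

theorem mul [SeminormedRing Y] {r : ℝ≥0} {f g : X → Y} {x : X}
    (hf : LocallyHolderAt r f x) (hg : LocallyHolderAt r g x) : LocallyHolderAt r (f * g) x := by
  obtain ⟨s, hs, Cf, A, hCf, hA⟩ := hf.exists_holderOnWith_bounded
  obtain ⟨t, ht, Cg, B, hCg, hB⟩ := hg.exists_holderOnWith_bounded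
  exact ⟨s ∩ t, inter_mem hs ht, _, (hCf.mono inter_subset_left).mul (hCg.mono inter_subset_right)
    (fun y hy => hA y hy.1) (fun y hy => hB y hy.2)⟩

theorem comp_lipschitzWith {Z : Type*} [PseudoMetricSpace Y] [PseudoMetricSpace Z] {r K : ℝ≥0}
    {f : Y → Z} {g : X → Y} {x : X} (hf : LocallyHolderAt r f (g x)) (hg : LipschitzWith K g) :
    LocallyHolderAt r (f ∘ g) x := by
  obtain ⟨s, hs, C, hC⟩ := hf
  refine ⟨g ⁻¹' s, hg.continuous.continuousAt hs, C * K ^ (r : ℝ), ?_⟩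
  simpa using hC.comp (holderOnWith_one.2 hg.lipschitzOnWith) (mapsTo_preimage g s)

end LocallyHolderAt

theorem holderWith_norm_rpow {E : Type*} [SeminormedAddCommGroup E] {p : ℝ≥0} (hp : p ≤ 1) :
    HolderWith 1 p (fun x : E => ‖x‖ ^ (p : ℝ)) := by
  rw [← holderOnWith_univ]
  refine .of_dist_le fun x _ y _ => ?_
  rw [Real.dist_eq, NNReal.coe_one, one_mul, dist_eq_norm]
  calc |‖x‖ ^ (p : ℝ) - ‖y‖ ^ (p : ℝ)| ≤ |‖x‖ - ‖y‖| ^ (p : ℝ) :=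
        Real.abs_rpow_sub_rpow_le (norm_nonneg x) (norm_nonneg y) p.coe_nonneg hp
    _ ≤ ‖x - y‖ ^ (p : ℝ) := by gcongr; exact abs_norm_sub_norm_le x y

end Holder

theorem not_locallyHolderAt_of_le_dist {X Y : Type*} [MetricSpace X] [PseudoMetricSpace Y]
    {r : ℝ≥0} {s K : ℝ} {f : X → Y} {x : X} [(𝓝[≠] x).NeBot] (hsr : s < r) (hK : 0 < K)
    (h : ∀ᶠ y in 𝓝 x, K * dist y x ^ s ≤ dist (f y) (f x)) : ¬ LocallyHolderAt r f x := by
  rintro ⟨t, ht, C, hC⟩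
  have hlim : Tendsto (fun y => C * dist y x ^ ((r : ℝ) - s)) (𝓝[≠] x) (𝓝 0) := by
    have hd : Tendsto (fun y => dist y x) (𝓝[≠] x) (𝓝 0) := tendsto_nhdsWithin_of_tendsto_nhds
      ((continuous_id.dist continuous_const).tendsto' x 0 (dist_self x))
    simpa [Real.zero_rpow (sub_pos.2 hsr).ne'] using
      (hd.rpow_const (Or.inr (sub_pos.2 hsr).le)).const_mul (C : ℝ)
  have hbig : ∀ᶠ y in 𝓝[≠] x, K ≤ C * dist y x ^ ((r : ℝ) - s) := by
    filter_upwards [nhdsWithin_le_nhds h, nhdsWithin_le_nhds ht, self_mem_nhdsWithin]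
      with y hy hyt hyx
    have hpos : 0 < dist y x := dist_pos.2 hyx
    have hsplit : dist y x ^ (r : ℝ) = dist y x ^ ((r : ℝ) - s) * dist y x ^ s := by
      rw [← Real.rpow_add hpos, sub_add_cancel]
    have := hy.trans (hC.dist_le hyt (mem_of_mem_nhds ht))
    rw [hsplit, ← mul_assoc] at this
    exact le_of_mul_le_mul_right this (Real.rpow_pos_of_pos hpos s)
  obtain ⟨y, hy₁, hy₂⟩ := ((hlim.eventually (eventually_lt_nhds hK)).and hbig).exists
  exact (hy₁.trans_le hy₂).false

theorem locallyHolderAt_v (β : ℝ≥0) (hβ : β ≤ 1) (p : ℂ × ℂ) : LocallyHolderAt β (v β) p := by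
  have hsnd : LocallyHolderAt β (fun z : ℂ × ℂ => ‖z.2‖) p :=
    (lipschitzWith_one_norm.comp LipschitzWith.prod_snd).locallyLipschitz.locallyHolderAt hβ p
  have hpow : LocallyHolderAt β (fun z : ℂ × ℂ => ‖z.1‖ ^ (β : ℝ)) p :=
    ((holderWith_norm_rpow hβ).locallyHolderAt p.1).comp_lipschitzWith LipschitzWith.prod_fst
  have hsmooth : LocallyHolderAt β (fun z : ℂ × ℂ => ‖z.1‖ ^ (2 - (β : ℝ))) p := by
    have hC1 : ContDiff ℝ 1 fun t : ℝ => t ^ (2 - (β : ℝ)) :=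
      Real.contDiff_rpow_const_of_le (by push_cast; linarith [show (β : ℝ) ≤ 1 from hβ])
    exact (hC1.locallyLipschitz.comp
      (lipschitzWith_one_norm.comp LipschitzWith.prod_fst).locallyLipschitz).locallyHolderAt hβ p
  exact (((HolderWith.const (C := 0)).locallyHolderAt p).mul hsnd).mul (hpow.add hsmooth)

theorem not_locallyHolderAt_v {β : ℝ} (hβ₀ : 0 < β) (hβ₁ : β < 1) {α : ℝ≥0} (hα : β < α)
    {z₂ : ℂ} (hz₂ : z₂ ≠ 0) : ¬ LocallyHolderAt α (v β) (0, z₂) := by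
  set γ : ℝ → ℂ × ℂ := fun t => ((t : ℂ), z₂)
  have hγ : LipschitzWith 1 γ := by
    have := (LipschitzWith.prodMk_right z₂).comp Complex.isometry_ofReal.lipschitz
    rwa [mul_one] at this
  have hv : ∀ t : ℝ, v β (γ t) = 2 / (1 - β) * ‖z₂‖ * (|t| ^ β + |t| ^ (2 - β)) := by
    simp [γ, v]
  have hK : 0 < 2 / (1 - β) * ‖z₂‖ := by
    have := sub_pos.2 hβ₁
    positivity
  intro h
  refine not_locallyHolderAt_of_le_dist hα hK (Eventually.of_forall fun t => ?_)
    ((show LocallyHolderAt α (v β) (γ 0) by simpa [γ] using h).comp_lipschitzWith hγ)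
  have h0 : |(0 : ℝ)| ^ β + |(0 : ℝ)| ^ (2 - β) = 0 := by
    simp [Real.zero_rpow hβ₀.ne', Real.zero_rpow (by linarith : (2 : ℝ) - β ≠ 0)]
  rw [Function.comp_apply, Function.comp_apply, hv, hv, h0, mul_zero, Real.dist_eq, sub_zero,
    Real.dist_eq, sub_zero, abs_of_nonneg (mul_nonneg hK.le (by positivity))]
  gcongr
  exact le_add_of_nonneg_right (by positivity)

/-- For `β ∈ (0,1)`, `v` is locally `β`-Hölder continuous on `ℂ²`, but not locally
`α`-Hölder near any point `(0,z₂)` with `z₂ ≠ 0` for any `α > β`. -/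
theorem v_holder (β : ℝ) (hβ : β ∈ Set.Ioo (0 : ℝ) 1) :
    (∀ p : ℂ × ℂ, ∃ N ∈ nhds p, ∃ C : NNReal,
      HolderOnWith C ⟨β, hβ.1.le⟩ (v β) N) ∧
    (∀ α : ℝ, ∀ hα : β < α, ∀ z₂ : ℂ, z₂ ≠ 0 →
      ¬ ∃ N ∈ nhds ((0 : ℂ), z₂), ∃ C : NNReal,
        HolderOnWith C ⟨α, (hβ.1.trans hα).le⟩ (v β) N) :=
  ⟨locallyHolderAt_v ⟨β, hβ.1.le⟩ hβ.2.le,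
    fun α hα _ hz₂ => not_locallyHolderAt_v (α := ⟨α, (hβ.1.trans hα).le⟩) hβ.1 hβ.2 hα hz₂⟩
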